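/- arXiv:2207.10540 — 7 statements merged into one kernel-verified Lean document; each statement's English description precedes it below -/
import Mathlib

section
/- Let M be a nonsingular n×n integer matrix with columns α₁,…,αₙ, and suppose that every entry of column αₖ is divisible by a prime p. Let M̃ be the matrix obtained from M by replacing αₖ with (1/p)αₖ. Then the p-adic valuation of the last invariant factor (in the Smith normal form) of M̃ is at most the p-adic valuation of the last invariant factor of M. -/
open Matrix

/-- A matrix over ℤ is unimodular if its determinant is a unit (±1). -/
def IsUnimodular {n : ℕ} (U : Matrix (Fin n) (Fin n) ℤ) : Prop := IsUnit U.det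

/-- `d` is the sequence of diagonal entries of a Smith normal form of `M`. -/
def IsSNF {n : ℕ} (M : Matrix (Fin n) (Fin n) ℤ) (d : Fin n → ℤ) : Prop :=
  (∃ U V : Matrix (Fin n) (Fin n) ℤ, IsUnimodular U ∧ IsUnimodular V ∧
      U * M * V = Matrix.diagonal d) ∧
  (∀ i, 0 ≤ d i) ∧ (∀ i j : Fin n, i ≤ j → d i ∣ d j)

theorem stmt0 (n : ℕ) (M : Matrix (Fin (n + 1)) (Fin (n + 1)) ℤ)
    (hM : M.det ≠ 0) (p : ℕ) (hp : p.Prime) (k : Fin (n + 1))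
    (hdiv : ∀ i, (p : ℤ) ∣ M i k)
    (Mt : Matrix (Fin (n + 1)) (Fin (n + 1)) ℤ)
    (hMt : Mt = M.updateCol k (fun i => M i k / p))
    (d dt : Fin (n + 1) → ℤ)
    (hd : IsSNF M d) (hdt : IsSNF Mt dt) :
    padicValInt p (dt (Fin.last n)) ≤ padicValInt p (d (Fin.last n)) := by
  haveI : Fact p.Prime := ⟨hp⟩
  obtain ⟨⟨U, V, hU, hV, hUV⟩, _, hdvd⟩ := hd
  obtain ⟨⟨Ut, Vt, hUt, hVt, hUVt⟩, _, _⟩ := hdt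
  -- integer inverses of the unimodular matrices
  have inv : ∀ W : Matrix (Fin (n + 1)) (Fin (n + 1)) ℤ, IsUnimodular W →
      ∃ W', W * W' = 1 ∧ W' * W = 1 := by
    intro W hW
    obtain ⟨u, hu⟩ := (Matrix.isUnit_iff_isUnit_det W).mpr hW
    exact ⟨u.inv, by rw [← hu]; exact u.mul_inv, by rw [← hu]; exact u.inv_mul⟩
  obtain ⟨U', hUU', hU'U⟩ := inv U hU
  obtain ⟨V', hVV', hV'V⟩ := inv V hV
  obtain ⟨Ut', hUtUt', hUt'Ut⟩ := inv Ut hUt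
  obtain ⟨Vt', hVtVt', hVt'Vt⟩ := inv Vt hVt
  set dl : ℤ := d (Fin.last n) with hdl
  -- M = U' * diagonal d * V'
  have hMform : M = U' * diagonal d * V' := by
    have h1 : U' * (U * M * V) * V' = (U' * U) * M * (V * V') := by noncomm_ring
    rw [hUV, hU'U, hVV', one_mul, mul_one] at h1
    exact h1.symm
  -- N with M * N = dl • 1
  set N : Matrix (Fin (n + 1)) (Fin (n + 1)) ℤ :=
    V * diagonal (fun i => dl / d i) * U with hN
  have hdiag : diagonal d * diagonal (fun i => dl / d i)
      = dl • (1 : Matrix (Fin (n + 1)) (Fin (n + 1)) ℤ) := by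
    rw [diagonal_mul_diagonal]
    have hc : (fun i => d i * (dl / d i)) = fun _ : Fin (n + 1) => dl :=
      funext fun i => Int.mul_ediv_cancel' (hdvd i (Fin.last n) (Fin.le_last i))
    rw [hc]
    exact (smul_one_eq_diagonal dl).symm
  have hMN : M * N = dl • (1 : Matrix (Fin (n + 1)) (Fin (n + 1)) ℤ) := by
    calc M * N = U' * (diagonal d * (V' * V) * diagonal (fun i => dl / d i)) * U := by
          rw [hMform, hN]; noncomm_ring
      _ = U' * (dl • 1) * U := by rw [hV'V, mul_one, hdiag]
      _ = dl • (U' * U) := by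
          rw [Matrix.mul_smul, Matrix.smul_mul, mul_one]
      _ = dl • 1 := by rw [hU'U]
  -- M = Mt * E
  set E : Matrix (Fin (n + 1)) (Fin (n + 1)) ℤ :=
    diagonal (fun i => if i = k then (p : ℤ) else 1) with hE
  have hME : M = Mt * E := by
    ext i j
    rw [hE, Matrix.mul_diagonal, hMt]
    by_cases h : j = k
    · subst h
      simp only [if_pos rfl, Matrix.updateCol_self]
      exact (Int.ediv_mul_cancel (hdiv i)).symm
    · simp [Matrix.updateCol_ne h, h]
  -- diagonal dt * B = dl • 1
  set B : Matrix (Fin (n + 1)) (Fin (n + 1)) ℤ := Vt' * (E * N) * Ut' with hB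
  have hDtB : diagonal dt * B = dl • (1 : Matrix (Fin (n + 1)) (Fin (n + 1)) ℤ) := by
    calc diagonal dt * B = Ut * (Mt * (Vt * Vt') * E * N) * Ut' := by
          rw [← hUVt, hB]; noncomm_ring
      _ = Ut * (M * N) * Ut' := by rw [hVtVt', mul_one, ← hME, mul_assoc]
      _ = dl • (Ut * Ut') := by
          rw [hMN, Matrix.mul_smul, Matrix.smul_mul, mul_one]
      _ = dl • 1 := by rw [hUtUt']
  -- hence dt_last ∣ dl
  have hdvd' : dt (Fin.last n) ∣ dl := by
    have := congrFun (congrFun hDtB (Fin.last n)) (Fin.last n)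
    rw [Matrix.diagonal_mul] at this
    simp only [Matrix.smul_apply, Matrix.one_apply_eq, smul_eq_mul, mul_one] at this
    exact ⟨B (Fin.last n) (Fin.last n), this.symm⟩
  -- dl ≠ 0
  have hdl0 : dl ≠ 0 := by
    intro h0
    have hdet := congrArg Matrix.det hUV
    rw [Matrix.det_mul, Matrix.det_mul, Matrix.det_diagonal] at hdet
    have hz : (∏ i, d i) = 0 := Finset.prod_eq_zero (Finset.mem_univ (Fin.last n)) h0
    rw [hz] at hdet
    rcases mul_eq_zero.mp hdet with h | h
    · rcases mul_eq_zero.mp h with h' | h'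
      · exact hU.ne_zero h'
      · exact hM h'
    · exact hV.ne_zero h
  -- conclude
  have hpow : (p : ℤ) ^ padicValInt p (dt (Fin.last n)) ∣ dl :=
    dvd_trans (padicValInt_dvd _) hdvd'
  rcases (padicValInt_dvd_iff _ _).mp hpow with h | h
  · exact absurd h hdl0
  · exact h
end

section
/- Let G be a graph with adjacency matrix A and walk matrix W = [e, Ae, …, A^{n-1}e], and suppose W is invertible over the rationals (G is controllable). If Q is a rational regular orthogonal matrix such that QᵀAQ = B where B is the adjacency matrix of some graph H, then Qᵀ = W(H)·W(G)^{-1}, where W(H) = [e, Be, …, B^{n-1}e]. In particular, Q is uniquely determined and rational. -/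
open Matrix

/-- `M` is the adjacency matrix of a graph: symmetric, 0-1, with zero diagonal. -/
def IsAdjacency {n : ℕ} (M : Matrix (Fin n) (Fin n) ℚ) : Prop :=
  Mᵀ = M ∧ (∀ i, M i i = 0) ∧ (∀ i j, M i j = 0 ∨ M i j = 1)

/-- The walk matrix `[e, Ae, …, A^{n-1}e]` of a matrix `A`, `e` the all-ones vector. -/
def walkMatrix {n : ℕ} (A : Matrix (Fin n) (Fin n) ℚ) : Matrix (Fin n) (Fin n) ℚ :=
  Matrix.of fun i j => ((A ^ (j : ℕ)).mulVec (fun _ => 1)) i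

lemma key_lemma {n : ℕ} (A B : Matrix (Fin n) (Fin n) ℚ)
    (hctrl : IsUnit (walkMatrix A).det)
    (Q : Matrix (Fin n) (Fin n) ℚ)
    (hO : Qᵀ * Q = 1) (hreg : Q.mulVec (fun _ => 1) = fun _ => 1)
    (hQ : Qᵀ * A * Q = B) :
    Qᵀ = walkMatrix B * (walkMatrix A)⁻¹ := by
  have hQQt : Q * Qᵀ = 1 := mul_eq_one_comm.mp hO
  have hcomm : Qᵀ * A = B * Qᵀ := by
    calc Qᵀ * A = Qᵀ * A * (Q * Qᵀ) := by rw [hQQt, mul_one]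
    _ = (Qᵀ * A * Q) * Qᵀ := by rw [Matrix.mul_assoc (Qᵀ * A), ← Matrix.mul_assoc]
    _ = B * Qᵀ := by rw [hQ]
  have hpow : ∀ k : ℕ, Qᵀ * A ^ k = B ^ k * Qᵀ := by
    intro k
    induction k with
    | zero => simp
    | succ k ih =>
      rw [pow_succ, pow_succ, ← Matrix.mul_assoc, ih, Matrix.mul_assoc, hcomm,
        ← Matrix.mul_assoc]
  have hte : Qᵀ.mulVec (fun _ => 1) = fun _ => 1 := by
    conv_lhs => rw [← hreg]
    rw [Matrix.mulVec_mulVec, hO, Matrix.one_mulVec]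
  have hW : walkMatrix B = Qᵀ * walkMatrix A := by
    ext i j
    have h1 : (B ^ (j : ℕ)).mulVec (fun _ => 1)
        = Qᵀ.mulVec ((A ^ (j : ℕ)).mulVec (fun _ => 1)) := by
      rw [Matrix.mulVec_mulVec, hpow, ← Matrix.mulVec_mulVec, hte]
    have h2 := congrFun h1 i
    simp only [walkMatrix, Matrix.of_apply, Matrix.mul_apply, Matrix.mulVec, dotProduct] at h2 ⊢
    rw [h2]
  rw [hW, Matrix.mul_assoc, Matrix.mul_nonsing_inv _ hctrl, mul_one]

theorem stmt2 (n : ℕ) (A B : Matrix (Fin n) (Fin n) ℚ)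
    (hA : IsAdjacency A) (hB : IsAdjacency B)
    (hctrl : IsUnit (walkMatrix A).det)
    (Q : Matrix (Fin n) (Fin n) ℚ)
    (hO : Qᵀ * Q = 1) (hreg : Q.mulVec (fun _ => 1) = fun _ => 1)
    (hQ : Qᵀ * A * Q = B) :
    Qᵀ = walkMatrix B * (walkMatrix A)⁻¹ ∧
    (∀ Q' : Matrix (Fin n) (Fin n) ℚ, Q'ᵀ * Q' = 1 →
      Q'.mulVec (fun _ => 1) = (fun _ => 1) → Q'ᵀ * A * Q' = B → Q' = Q) := by
  have h := key_lemma A B hctrl Q hO hreg hQ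
  refine ⟨h, fun Q' hO' hreg' hQ' => ?_⟩
  have h' := key_lemma A B hctrl Q' hO' hreg' hQ'
  have : Q'ᵀ = Qᵀ := h'.trans h.symm
  simpa using congrArg Matrix.transpose this
end

section
/- Let m be a positive integer and v an integer vector in ℤⁿ such that v ≢ 0 (mod m) (some entry is not divisible by m). Suppose w is a perfect m-representative of v, i.e., w ≡ v (mod m) entrywise, eᵀw = m, and wᵀw = m². Then for every index j with vⱼ ≡ 0 (mod m), we have wⱼ = 0. -/
theorem stmt6 (n : ℕ) (m : ℕ) (hm : 0 < m) (v w : Fin n → ℤ)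
    (hv : ∃ i, ¬ ((m : ℤ) ∣ v i))
    (hcong : ∀ i, w i ≡ v i [ZMOD (m : ℤ)])
    (hsum : ∑ i, w i = (m : ℤ))
    (hnorm : ∑ i, w i * w i = (m : ℤ) ^ 2) :
    ∀ j, (m : ℤ) ∣ v j → w j = 0 := by
  intro j hj
  by_contra hwj
  obtain ⟨i, hi⟩ := hv
  have hdj : (m : ℤ) ∣ v j - w j := (hcong j).dvd
  have hdw : (m : ℤ) ∣ w j := by
    have := dvd_sub hj hdj
    simpa using this
  have hwi : w i ≠ 0 := by
    intro h0
    apply hi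
    have := (hcong i).dvd
    rw [h0, sub_zero] at this
    exact this
  have hij : i ≠ j := fun h => hi (h ▸ hj)
  -- lower bounds on squares
  have hsq_j : (m : ℤ) ^ 2 ≤ w j * w j := by
    obtain ⟨k, hk⟩ := hdw
    have hk0 : k ≠ 0 := by
      intro h0; apply hwj; rw [hk, h0, mul_zero]
    have h1 : 1 ≤ k * k := by
      rcases lt_or_gt_of_ne hk0 with h | h <;> nlinarith
    have hm' : (0:ℤ) < (m:ℤ) := by exact_mod_cast hm
    rw [hk]; nlinarith
  have hsq_i : 1 ≤ w i * w i := by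
    rcases lt_or_gt_of_ne hwi with h | h <;> nlinarith
  have key : w j * w j + w i * w i ≤ ∑ t, w t * w t := by
    have hsub : ({j, i} : Finset (Fin n)) ⊆ Finset.univ := Finset.subset_univ _
    have := Finset.sum_le_sum_of_subset_of_nonneg hsub
      (fun t _ _ => mul_self_nonneg (w t))
    rwa [Finset.sum_pair (Ne.symm hij)] at this
  rw [hnorm] at key
  linarith
end

section
/- Let m be a positive integer, v ∈ ℤⁿ an integer vector, u its shortest m-representative (u ≡ v (mod m) with −m/2 < uᵢ ≤ m/2 for all i), and w a perfect m-representative of v (w ≡ v (mod m), eᵀw = m, wᵀw = m²). Assume some entry of v is not divisible by m. Then the Hamming distance between w and u restricted to the coordinates where v ≢ 0 (mod m) is at most 3; moreover, for every index i with wᵢ ≠ uᵢ, either wᵢ = uᵢ − m with uᵢ > 0, or wᵢ = uᵢ + m with uᵢ < 0. -/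
/-!
Since `∑ wᵢ² = m²`, every `|wᵢ| ≤ m`, so `wᵢ ≡ uᵢ (mod m)` leaves only `wᵢ ∈ {uᵢ, uᵢ - m, uᵢ + m}`.
The two boundary cases `uᵢ = 0`, `wᵢ = ∓m` would make `w = ∓m eᵢ`: the sign `-` contradicts
`∑ wᵢ = m`, the sign `+` makes `v ≡ 0 (mod m)`. Hence `2wᵢ ∉ (-m, m]` wherever `wᵢ ≠ uᵢ`, and for
such integers `2wᵢ(2wᵢ - 1) ≥ m(m + 1)`. As `x(x - 1) ≥ 0` for every integer `x`, summing gives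
`#{i | wᵢ ≠ uᵢ} · m(m + 1) ≤ ∑ 2wᵢ(2wᵢ - 1) = 4m² - 2m`, so at most three entries differ.
-/

open Finset

theorem Int.eq_sub_or_eq_add_of_modEq {m a b : ℤ} (hab : a ≡ b [ZMOD m]) (ha : |a| ≤ m)
    (hb : -m < 2 * b ∧ 2 * b ≤ m) (hne : a ≠ b) : a = b - m ∨ a = b + m := by
  obtain ⟨k, hk⟩ := hab.dvd
  obtain ⟨ha₁, ha₂⟩ := abs_le.mp ha
  have hk0 : k ≠ 0 := by rintro rfl; exact hne (by linarith)
  have hk_le : k ≤ 1 := by nlinarith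
  have hk_ge : -1 ≤ k := by nlinarith
  obtain rfl | rfl : k = 1 ∨ k = -1 := by omega
  · left; linarith
  · right; linarith

section PerfectRepresentative

variable {ι : Type*} [Fintype ι] {m : ℤ} {w : ι → ℤ}

theorem abs_le_of_sum_mul_self_eq (hnorm : ∑ j, w j * w j = m ^ 2) (i : ι) : |w i| ≤ |m| := by
  rw [← sq_le_sq, sq, ← hnorm]
  exact single_le_sum (fun j _ => mul_self_nonneg (w j)) (mem_univ i)

theorem eq_and_eq_zero_of_mul_self_eq (hsum : ∑ j, w j = m) (hnorm : ∑ j, w j * w j = m ^ 2)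
    {i : ι} (hi : w i * w i = m ^ 2) : w i = m ∧ ∀ j ≠ i, w j = 0 := by
  classical
  rw [← add_sum_erase _ _ (mem_univ i), hi, add_eq_left] at hnorm
  have hzero : ∀ j ≠ i, w j = 0 := fun j hj => mul_self_eq_zero.mp <|
    (sum_eq_zero_iff_of_nonneg fun k _ => mul_self_nonneg (w k)).mp hnorm j (by simpa)
  refine ⟨?_, hzero⟩
  rw [← hsum, sum_eq_single i (fun j _ hj => hzero j hj) (by simp)]

theorem eq_sub_pos_or_eq_add_neg_of_modEq (hsum : ∑ j, w j = m) (hnorm : ∑ j, w j * w j = m ^ 2)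
    (hw : ∃ j, ¬ m ∣ w j) {i : ι} {u : ℤ} (hcong : w i ≡ u [ZMOD m])
    (hshort : -m < 2 * u ∧ 2 * u ≤ m) (hne : w i ≠ u) :
    (w i = u - m ∧ 0 < u) ∨ (w i = u + m ∧ u < 0) := by
  have hm : 0 < m := by linarith
  have hwi := abs_le_of_sum_mul_self_eq hnorm i
  rw [abs_of_pos hm] at hwi
  obtain ⟨hlow, hhigh⟩ := abs_le.mp hwi
  rcases Int.eq_sub_or_eq_add_of_modEq hcong hwi hshort hne with h | h
  · refine .inl ⟨h, ?_⟩
    by_contra! hu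
    have hwm : w i = -m := by linarith
    have := (eq_and_eq_zero_of_mul_self_eq hsum hnorm (by rw [hwm]; ring)).1
    linarith
  · refine .inr ⟨h, ?_⟩
    by_contra! hu
    have hwm : w i = m := by linarith
    obtain ⟨-, hzero⟩ := eq_and_eq_zero_of_mul_self_eq hsum hnorm (by rw [hwm]; ring)
    obtain ⟨j, hj⟩ := hw
    rcases eq_or_ne j i with rfl | hji
    · exact hj (hwm ▸ dvd_refl m)
    · exact hj (hzero j hji ▸ dvd_zero m)

theorem card_le_three_of_two_mul_notMem_Ioc (hsum : ∑ j, w j = m)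
    (hnorm : ∑ j, w j * w j = m ^ 2) (hm : 0 < m) (S : Finset ι)
    (hS : ∀ i ∈ S, 2 * w i ∉ Set.Ioc (-m) m) : #S ≤ 3 := by
  set q : ι → ℤ := fun j => 2 * w j * (2 * w j - 1)
  have hq_nonneg : ∀ j, 0 ≤ q j := fun j => by nlinarith [Int.le_self_sq (2 * w j)]
  have hq_S : ∀ i ∈ S, m * (m + 1) ≤ q i := by
    intro i hi
    rcases le_or_gt (2 * w i) (-m) with h | h
    · nlinarith
    · have : m + 1 ≤ 2 * w i := by
        by_contra!
        exact hS i hi ⟨h, by linarith⟩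
      nlinarith
  have hq_sum : ∑ j, q j = 4 * m ^ 2 - 2 * m := by
    simp only [q, mul_sub, mul_one, sum_sub_distrib, ← mul_sum]
    rw [show ∑ j, 2 * w j * (2 * w j) = 4 * ∑ j, w j * w j by rw [mul_sum]; ring_nf, hnorm, hsum]
  have hbound := calc (#S : ℤ) * (m * (m + 1)) = #S • (m * (m + 1)) := (nsmul_eq_mul _ _).symm
    _ ≤ ∑ i ∈ S, q i := card_nsmul_le_sum S q _ hq_S
    _ ≤ ∑ j, q j := sum_le_sum_of_subset_of_nonneg (subset_univ S) fun j _ _ => hq_nonneg j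
    _ = 4 * m ^ 2 - 2 * m := hq_sum
  by_contra! hcard
  have hfour : (4 : ℤ) ≤ #S := by exact_mod_cast hcard
  nlinarith

end PerfectRepresentative

theorem stmt7_general (n : ℕ) (m : ℕ) (v u w : Fin n → ℤ)
    (hv : ∃ i, ¬ ((m : ℤ) ∣ v i))
    -- u is the shortest m-representative of v: u ≡ v (mod m), −m/2 < uᵢ ≤ m/2
    (hu_cong : ∀ i, u i ≡ v i [ZMOD (m : ℤ)])
    (hu_short : ∀ i, -(m : ℤ) < 2 * u i ∧ 2 * u i ≤ (m : ℤ))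
    -- w is a perfect m-representative of v
    (hw_cong : ∀ i, w i ≡ v i [ZMOD (m : ℤ)])
    (hw_sum : ∑ i, w i = (m : ℤ))
    (hw_norm : ∑ i, w i * w i = (m : ℤ) ^ 2) :
    (Finset.univ.filter (fun i => ¬ ((m : ℤ) ∣ v i) ∧ w i ≠ u i)).card ≤ 3 ∧
    (∀ i, w i ≠ u i →
      (w i = u i - (m : ℤ) ∧ 0 < u i) ∨ (w i = u i + (m : ℤ) ∧ u i < 0)) := by
  obtain ⟨i₀, hi₀⟩ := hv
  have hm : (0 : ℤ) < m := by linarith [hu_short i₀]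
  have hw : ∃ j, ¬ (m : ℤ) ∣ w j := ⟨i₀, by rwa [(hw_cong i₀).dvd_iff]⟩
  have hsign : ∀ i, w i ≠ u i →
      (w i = u i - m ∧ 0 < u i) ∨ (w i = u i + m ∧ u i < 0) := fun i =>
    eq_sub_pos_or_eq_add_neg_of_modEq hw_sum hw_norm hw
      ((hw_cong i).trans (hu_cong i).symm) (hu_short i)
  refine ⟨le_trans (card_le_card (monotone_filter_right _ fun i _ h => h.2)) ?_, hsign⟩
  refine card_le_three_of_two_mul_notMem_Ioc hw_sum hw_norm hm _ fun i hi ⟨hlow, hhigh⟩ => ?_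
  rcases hsign i (mem_filter.mp hi).2 with ⟨h, -⟩ | ⟨h, -⟩ <;> linarith [hu_short i]

theorem stmt7 (n : ℕ) (m : ℕ) (hm : 0 < m) (v u w : Fin n → ℤ)
    (hv : ∃ i, ¬ ((m : ℤ) ∣ v i))
    -- u is the shortest m-representative of v: u ≡ v (mod m), −m/2 < uᵢ ≤ m/2
    (hu_cong : ∀ i, u i ≡ v i [ZMOD (m : ℤ)])
    (hu_short : ∀ i, -(m : ℤ) < 2 * u i ∧ 2 * u i ≤ (m : ℤ))
    -- w is a perfect m-representative of v
    (hw_cong : ∀ i, w i ≡ v i [ZMOD (m : ℤ)])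
    (hw_sum : ∑ i, w i = (m : ℤ))
    (hw_norm : ∑ i, w i * w i = (m : ℤ) ^ 2) :
    (Finset.univ.filter (fun i => ¬ ((m : ℤ) ∣ v i) ∧ w i ≠ u i)).card ≤ 3 ∧
    (∀ i, w i ≠ u i →
      (w i = u i - (m : ℤ) ∧ 0 < u i) ∨ (w i = u i + (m : ℤ) ∧ u i < 0)) :=
  stmt7_general n m v u w hv hu_cong hu_short hw_cong hw_sum hw_norm
end

section
/- Let v ∈ ℤⁿ with v ≢ 0 (mod m) for a positive integer m, and let w be the shortest m-representative of v. If v admits a perfect m-representative, then wᵀw ≤ m² and |eᵀw − m| ≤ 3m. -/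
/-!
Let `x` be a perfect representative, so `∑ xᵢ = m` and `∑ xᵢ² = m²`, and write `xᵢ = wᵢ + m kᵢ`.
Since `xᵢ - wᵢ` and `xᵢ + wᵢ = 2wᵢ + m kᵢ` have the same sign, `wᵢ² ≤ xᵢ²`, which gives the first
bound. For the second, `|xᵢ| ≥ m (|kᵢ| - 1/2)` yields `m |xᵢ - wᵢ| ≤ 4 xᵢ²`, strictly when `xᵢ > 0`.
Some `xᵢ` is positive, so `m |∑ wᵢ - m| ≤ m ∑ |xᵢ - wᵢ| < 4 m²`; as `∑ wᵢ - m` is a multiple of `m`,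
this forces `|∑ wᵢ - m| ≤ 3m`.
-/

namespace Int

variable {m x w : ℤ}

theorem mul_self_le_mul_self_of_modEq_of_shortest (h : w ≡ x [ZMOD m])
    (hw : -m < 2 * w ∧ 2 * w ≤ m) : w * w ≤ x * x := by
  obtain ⟨k, hk⟩ := h.dvd
  have hsub : x * x - w * w = m * k * (2 * w + m * k) := by rw [← hk]; ring
  rcases lt_trichotomy k 0 with hk0 | rfl | hk0
  · have : m * k ≤ -m := by nlinarith
    nlinarith
  · linarith
  · have : m ≤ m * k := by nlinarith
    nlinarith

theorem mul_mul_lt_of_sub_eq_mul_of_pos {k : ℤ} (hw : -m < 2 * w ∧ 2 * w ≤ m)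
    (hk : x - w = m * k) (hk0 : 0 < k) : m * (m * k) < 4 * (x * x) := by
  have hm : 0 < m := by linarith
  have hsq : (m * (2 * k - 1)) * (m * (2 * k - 1)) < (2 * x) * (2 * x) :=
    mul_self_lt_mul_self (by nlinarith) (by linarith)
  have hk' : 0 ≤ m * m * ((4 * k - 1) * (k - 1)) :=
    mul_nonneg (by positivity) (mul_nonneg (by omega) (by omega))
  linarith

theorem mul_abs_sub_le_of_modEq_of_shortest (h : w ≡ x [ZMOD m])
    (hw : -m < 2 * w ∧ 2 * w ≤ m) : m * |x - w| ≤ 4 * (x * x) := by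
  obtain ⟨k, hk⟩ := h.dvd
  have hm : 0 < m := by linarith
  rw [hk, abs_mul, abs_of_pos hm]
  rcases lt_trichotomy k 0 with hk0 | rfl | hk0
  · have hsq : (-(m * (2 * k + 1))) * (-(m * (2 * k + 1))) ≤ (-(2 * x)) * (-(2 * x)) :=
      mul_self_le_mul_self (by nlinarith) (by linarith)
    have hk' : 0 ≤ m * m * ((4 * k + 1) * (k + 1)) :=
      mul_nonneg (by positivity) (mul_nonneg_of_nonpos_of_nonpos (by omega) (by omega))
    rw [abs_of_neg hk0]
    linarith
  · simpa using mul_self_nonneg x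
  · rw [abs_of_pos hk0]
    exact (mul_mul_lt_of_sub_eq_mul_of_pos hw hk hk0).le

theorem mul_abs_sub_lt_of_modEq_of_shortest (h : w ≡ x [ZMOD m])
    (hw : -m < 2 * w ∧ 2 * w ≤ m) (hx : 0 < x) : m * |x - w| < 4 * (x * x) := by
  obtain ⟨k, hk⟩ := h.dvd
  have hm : 0 < m := by linarith
  rw [hk, abs_mul, abs_of_pos hm]
  rcases lt_trichotomy k 0 with hk0 | rfl | hk0
  · nlinarith
  · simpa using mul_pos hx hx
  · rw [abs_of_pos hk0]
    exact mul_mul_lt_of_sub_eq_mul_of_pos hw hk hk0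

theorem abs_le_mul_of_dvd_of_abs_lt {a c : ℤ} (hm : 0 < m) (h : m ∣ a)
    (ha : |a| < (c + 1) * m) : |a| ≤ c * m := by
  obtain ⟨k, rfl⟩ := h
  rw [abs_mul, abs_of_pos hm] at *
  have : |k| < c + 1 := by nlinarith
  nlinarith

end Int

theorem stmt8_general (n : ℕ) (m : ℕ) (hm : 0 < m) (v w : Fin n → ℤ)
    -- w is the shortest m-representative of v
    (hw_cong : ∀ i, w i ≡ v i [ZMOD (m : ℤ)])
    (hw_short : ∀ i, -(m : ℤ) < 2 * w i ∧ 2 * w i ≤ (m : ℤ))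
    -- v admits a perfect m-representative
    (hperf : ∃ x : Fin n → ℤ, (∀ i, x i ≡ v i [ZMOD (m : ℤ)]) ∧
        (∑ i, x i = (m : ℤ)) ∧ (∑ i, x i * x i = (m : ℤ) ^ 2)) :
    (∑ i, w i * w i ≤ (m : ℤ) ^ 2) ∧ |(∑ i, w i) - (m : ℤ)| ≤ 3 * (m : ℤ) := by
  obtain ⟨x, hx_cong, hx_sum, hx_sq⟩ := hperf
  have hwx i : w i ≡ x i [ZMOD m] := (hw_cong i).trans (hx_cong i).symm
  have hm' : (0 : ℤ) < m := by exact_mod_cast hm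
  refine ⟨hx_sq ▸ Finset.sum_le_sum fun i _ =>
    Int.mul_self_le_mul_self_of_modEq_of_shortest (hwx i) (hw_short i), ?_⟩
  obtain ⟨j, -, hj⟩ : ∃ j ∈ Finset.univ, (0 : ℤ) < x j :=
    Finset.exists_lt_of_sum_lt (by simpa [hx_sum] using hm')
  have hdvd : (m : ℤ) ∣ ∑ i, w i - m :=
    hx_sum ▸ (Int.ModEq.sum (s := Finset.univ) fun i _ => hwx i).symm.dvd
  refine Int.abs_le_mul_of_dvd_of_abs_lt hm' hdvd (lt_of_mul_lt_mul_left ?_ hm'.le)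
  calc (m : ℤ) * |∑ i, w i - m| = m * |∑ i, (x i - w i)| := by
        rw [← abs_neg, Finset.sum_sub_distrib, hx_sum, neg_sub]
    _ ≤ ∑ i, m * |x i - w i| := by
        rw [← Finset.mul_sum]
        exact mul_le_mul_of_nonneg_left (Finset.abs_sum_le_sum_abs _ _) hm'.le
    _ < ∑ i, 4 * (x i * x i) :=
        Finset.sum_lt_sum (fun i _ => Int.mul_abs_sub_le_of_modEq_of_shortest (hwx i) (hw_short i))
          ⟨j, Finset.mem_univ _, Int.mul_abs_sub_lt_of_modEq_of_shortest (hwx j) (hw_short j) hj⟩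
    _ = m * ((3 + 1) * m) := by rw [← Finset.mul_sum, hx_sq]; ring

theorem stmt8 (n : ℕ) (m : ℕ) (hm : 0 < m) (v w : Fin n → ℤ)
    (hv : ∃ i, ¬ ((m : ℤ) ∣ v i))
    -- w is the shortest m-representative of v
    (hw_cong : ∀ i, w i ≡ v i [ZMOD (m : ℤ)])
    (hw_short : ∀ i, -(m : ℤ) < 2 * w i ∧ 2 * w i ≤ (m : ℤ))
    -- v admits a perfect m-representative
    (hperf : ∃ x : Fin n → ℤ, (∀ i, x i ≡ v i [ZMOD (m : ℤ)]) ∧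
        (∑ i, x i = (m : ℤ)) ∧ (∑ i, x i * x i = (m : ℤ) ^ 2)) :
    (∑ i, w i * w i ≤ (m : ℤ) ^ 2) ∧ |(∑ i, w i) - (m : ℤ)| ≤ 3 * (m : ℤ) :=
  stmt8_general n m hm v w hw_cong hw_short hperf
end

section
/- Let G be a controllable graph on n vertices with adjacency matrix A, let L be a positive integer, and suppose ξ₁, …, ξₙ are integer vectors satisfying: ξᵢᵀξᵢ = L², eᵀξᵢ = L, ξᵢᵀAξᵢ = 0 for all i, and for all i ≠ j, ξᵢᵀξⱼ = 0 and ξᵢᵀAξⱼ ∈ {0, L²}. Then Q := (1/L)[ξ₁,…,ξₙ] is a regular orthogonal matrix and QᵀAQ is a symmetric 0-1 matrix with zero diagonal, i.e., the adjacency matrix of a graph. -/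
open Matrix

/-!
The (i, j) entry of `Qᵀ B Q` is `ξᵢᵀ B ξⱼ / L²`, so the conditions on the `ξᵢ` are exactly the
entrywise statements `QᵀQ = I` and `QᵀAQ ∈ {0, 1}` with zero diagonal. Regularity follows from
`Qᵀ e = e` (the column sums are `L / L`), because an orthogonal `Q` inverts `Qᵀ`.
-/

section ScaledColumns

variable {K ι : Type*} [Field K]

lemma of_columns_div_eq_smul (ξ : ι → ι → K) (c : K) :
    (Matrix.of fun r k => ξ k r / c) = c⁻¹ • (Matrix.of ξ)ᵀ := by
  ext r k
  simp [div_eq_inv_mul]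

variable [Fintype ι]

lemma transpose_mul_mul_of_columns_div_apply (ξ : ι → ι → K) (c : K) (B : Matrix ι ι K)
    (i j : ι) :
    ((Matrix.of fun r k => ξ k r / c)ᵀ * B * Matrix.of fun r k => ξ k r / c) i j =
      ξ i ⬝ᵥ B *ᵥ ξ j / c ^ 2 := by
  rw [of_columns_div_eq_smul, transpose_smul, transpose_transpose, smul_mul, smul_mul,
    Matrix.mul_smul, smul_smul, Matrix.smul_apply, mul_mul_apply,
    transpose_transpose, smul_eq_mul, div_eq_inv_mul, sq, mul_inv]
  rfl

lemma transpose_mul_of_columns_div_eq_one [DecidableEq ι] {ξ : ι → ι → K} {c : K} (hc : c ≠ 0)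
    (hnorm : ∀ i, ξ i ⬝ᵥ ξ i = c ^ 2) (horth : ∀ i j, i ≠ j → ξ i ⬝ᵥ ξ j = 0) :
    (Matrix.of fun r k => ξ k r / c)ᵀ * (Matrix.of fun r k => ξ k r / c) = 1 := by
  ext i j
  have h := transpose_mul_mul_of_columns_div_apply ξ c 1 i j
  rw [Matrix.mul_one, one_mulVec] at h
  rw [h]
  rcases eq_or_ne i j with rfl | hij
  · simp [hnorm, hc]
  · simp [horth i j hij, one_apply_ne hij]

lemma transpose_mulVec_of_columns_div_one {ξ : ι → ι → K} {c : K} (hc : c ≠ 0)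
    (hsum : ∀ i, ∑ r, ξ i r = c) :
    (Matrix.of fun r k => ξ k r / c)ᵀ *ᵥ (fun _ => 1) = fun _ => 1 := by
  ext k
  simp [mulVec, dotProduct, ← Finset.sum_div, hsum k, hc]

end ScaledColumns

lemma mulVec_eq_of_transpose_mulVec_eq {R ι : Type*} [CommRing R] [Fintype ι] [DecidableEq ι]
    {Q : Matrix ι ι R} (hQ : Qᵀ * Q = 1) {v : ι → R} (hv : Qᵀ *ᵥ v = v) : Q *ᵥ v = v := by
  conv_lhs => rw [← hv, mulVec_mulVec, mul_eq_one_comm.mp hQ, one_mulVec]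

lemma isAdjacency_of_entries {n : ℕ} {M : Matrix (Fin n) (Fin n) ℚ} (hM : Mᵀ = M)
    (hentry : ∀ i j, M i j = 0 ∨ i ≠ j ∧ M i j = 1) : IsAdjacency M := by
  refine ⟨hM, fun i => ?_, fun i j => (hentry i j).imp_right And.right⟩
  rcases hentry i i with h | ⟨hii, -⟩
  · exact h
  · exact absurd rfl hii

theorem stmt9_general (n : ℕ) (A : Matrix (Fin n) (Fin n) ℚ)
    (hA : IsAdjacency A)
    (L : ℕ) (hL : 0 < L) (ξ : Fin n → (Fin n → ℚ))
    (hnorm : ∀ i, dotProduct (ξ i) (ξ i) = (L : ℚ) ^ 2)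
    (hsum : ∀ i, ∑ r, ξ i r = (L : ℚ))
    (hdiag : ∀ i, dotProduct (ξ i) (A.mulVec (ξ i)) = 0)
    (horth : ∀ i j, i ≠ j → dotProduct (ξ i) (ξ j) = 0)
    (hcross : ∀ i j, i ≠ j →
      dotProduct (ξ i) (A.mulVec (ξ j)) = 0 ∨
      dotProduct (ξ i) (A.mulVec (ξ j)) = (L : ℚ) ^ 2)
    (Q : Matrix (Fin n) (Fin n) ℚ) (hQ : Q = Matrix.of fun r c => ξ c r / (L : ℚ)) :
    (Qᵀ * Q = 1) ∧ (Q.mulVec (fun _ => 1) = fun _ => 1) ∧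
    IsAdjacency (Qᵀ * A * Q) := by
  subst hQ
  have hL0 : (L : ℚ) ≠ 0 := by exact_mod_cast hL.ne'
  have hQQ := transpose_mul_of_columns_div_eq_one hL0 hnorm horth
  refine ⟨hQQ, mulVec_eq_of_transpose_mulVec_eq hQQ (transpose_mulVec_of_columns_div_one hL0 hsum),
    isAdjacency_of_entries (by simp [Matrix.mul_assoc, hA.1]) fun i j => ?_⟩
  rw [transpose_mul_mul_of_columns_div_apply]
  rcases eq_or_ne i j with rfl | hij
  · simp [hdiag]
  · rcases hcross i j hij with h | h
    · simp [h]
    · simp [h, hij, hL0]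

theorem stmt9 (n : ℕ) (A : Matrix (Fin n) (Fin n) ℚ)
    (hA : IsAdjacency A) (hctrl : IsUnit (walkMatrix A).det)
    (L : ℕ) (hL : 0 < L) (ξ : Fin n → (Fin n → ℚ))
    (hint : ∀ i j, ∃ z : ℤ, ξ i j = (z : ℚ))
    (hnorm : ∀ i, dotProduct (ξ i) (ξ i) = (L : ℚ) ^ 2)
    (hsum : ∀ i, ∑ r, ξ i r = (L : ℚ))
    (hdiag : ∀ i, dotProduct (ξ i) (A.mulVec (ξ i)) = 0)
    (horth : ∀ i j, i ≠ j → dotProduct (ξ i) (ξ j) = 0)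
    (hcross : ∀ i j, i ≠ j →
      dotProduct (ξ i) (A.mulVec (ξ j)) = 0 ∨
      dotProduct (ξ i) (A.mulVec (ξ j)) = (L : ℚ) ^ 2)
    (Q : Matrix (Fin n) (Fin n) ℚ) (hQ : Q = Matrix.of fun r c => ξ c r / (L : ℚ)) :
    (Qᵀ * Q = 1) ∧ (Q.mulVec (fun _ => 1) = fun _ => 1) ∧
    IsAdjacency (Qᵀ * A * Q) :=
  stmt9_general n A hA L hL ξ hnorm hsum hdiag horth hcross Q hQ
end

section
/- Let A be the adjacency matrix of a graph G on n vertices and Q a regular orthogonal matrix with B = QᵀAQ the adjacency matrix of a graph H. Then for every monic integer polynomial f, we have Qᵀ f(A) e = f(B) e, where e is the all-ones vector. In particular, if f(A)e ≡ 0 (mod p) for a prime p, and Q has level coprime to p, then f(B)e ≡ 0 (mod p). -/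
open Matrix

def IsLevel {n : ℕ} (ℓ : ℕ) (Q : Matrix (Fin n) (Fin n) ℚ) : Prop :=
  0 < ℓ ∧ (∀ i j, ∃ z : ℤ, (ℓ : ℚ) * Q i j = (z : ℚ)) ∧
    ∀ k : ℕ, 0 < k → (∀ i j, ∃ z : ℤ, (k : ℚ) * Q i j = (z : ℚ)) → ℓ ≤ k

/-! `Qᵀ` intertwines `A` with `B` (as `Q Qᵀ = 1`), hence every polynomial in `A` with the same
polynomial in `B`, and `Qᵀ e = Qᵀ Q e = e`. For the congruence, `ℓ Qᵀ` is integral, so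
`ℓ f(B) e = (ℓ Qᵀ) f(A) e ∈ p ℤⁿ`; as `f(B) e` is integral (`B` is) and `p ∤ ℓ`, `p` divides `f(B) e`. -/

open Polynomial

theorem SemiconjBy.aeval {R S : Type*} [CommSemiring R] [Semiring S] [Algebra R S]
    {p a b : S} (h : SemiconjBy p a b) (f : R[X]) : SemiconjBy p (aeval a f) (aeval b f) := by
  induction f using Polynomial.induction_on' with
  | add f g hf hg => simpa only [map_add] using hf.add_right hg
  | monomial k r =>
    simp only [aeval_monomial]
    exact SemiconjBy.mul_right (Algebra.commutes r p).symm (h.pow_right k)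

section IntegralVectors

variable {ι κ : Type*} [Fintype κ]

theorem Matrix.exists_intCast_aeval_mulVec_one [DecidableEq ι] [Fintype ι] {R : Type*} [Ring R]
    {B : Matrix ι ι R} (hB : ∀ i j, ∃ z : ℤ, B i j = z) (f : ℤ[X]) (i : ι) :
    ∃ c : ℤ, (aeval B f *ᵥ fun _ => 1) i = c := by
  choose B₀ hB₀ using hB
  have hcast : aeval B f = (aeval (of B₀) f).map Int.cast := by
    have hmap : B = (Algebra.ofId ℤ R).mapMatrix (of B₀) := by ext i j; exact hB₀ i j
    rw [hmap, aeval_algHom_apply]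
    rfl
  refine ⟨(aeval (of B₀) f *ᵥ fun _ => 1) i, ?_⟩
  rw [hcast]
  simp [mulVec, dotProduct]

theorem Matrix.exists_mulVec_apply_eq_mul_of_coprime {M : Matrix ι κ ℚ} {v : κ → ℚ} {ℓ p : ℕ}
    (hM : ∀ i j, ∃ z : ℤ, (ℓ : ℚ) * M i j = z) (hv : ∀ j, ∃ z : ℤ, v j = p * z)
    (hcop : Nat.Coprime ℓ p) (i : ι) (hMv : ∃ c : ℤ, (M *ᵥ v) i = c) :
    ∃ z : ℤ, (M *ᵥ v) i = p * z := by
  obtain ⟨c, hc⟩ := hMv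
  choose z hz using hv
  choose w hw using hM i
  have hℓc : (ℓ : ℤ) * c = p * ∑ j, w j * z j := by
    have : (ℓ : ℚ) * c = p * ∑ j, w j * z j := by
      rw [← hc, mulVec, dotProduct, Finset.mul_sum]
      push_cast
      rw [Finset.mul_sum]
      refine Finset.sum_congr rfl fun j _ => ?_
      rw [hz j, ← mul_assoc, hw j]
      ring
    exact_mod_cast this
  obtain ⟨d, hd⟩ := (Nat.isCoprime_iff_coprime.mpr hcop).symm.dvd_of_dvd_mul_left ⟨_, hℓc⟩
  exact ⟨d, by rw [hc, hd]; push_cast; rfl⟩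

end IntegralVectors

theorem stmt19_general (n : ℕ) (A B : Matrix (Fin n) (Fin n) ℚ)
    (hB : IsAdjacency B)
    (Q : Matrix (Fin n) (Fin n) ℚ)
    (hO : Qᵀ * Q = 1) (hreg : Q.mulVec (fun _ => 1) = fun _ => 1)
    (hQ : B = Qᵀ * A * Q)
    (f : Polynomial ℤ) :
    (Qᵀ.mulVec ((Polynomial.aeval A f).mulVec (fun _ => 1)) =
      (Polynomial.aeval B f).mulVec (fun _ => 1)) ∧
    (∀ (p : ℕ), p.Prime →
      (∀ i, ∃ z : ℤ, ((Polynomial.aeval A f).mulVec (fun _ => 1)) i = (p : ℚ) * z) →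
      ∀ ℓ : ℕ, IsLevel ℓ Q → Nat.Coprime ℓ p →
      ∀ i, ∃ z : ℤ, ((Polynomial.aeval B f).mulVec (fun _ => 1)) i = (p : ℚ) * z) := by
  have hintertwine : SemiconjBy Qᵀ A B := by
    rw [SemiconjBy, hQ, Matrix.mul_assoc _ Q, mul_eq_one_comm.mp hO, Matrix.mul_one]
  have hQe : Qᵀ *ᵥ (fun _ => 1) = fun _ => (1 : ℚ) := by
    calc Qᵀ *ᵥ (fun _ => 1) = Qᵀ *ᵥ (Q *ᵥ fun _ => 1) := by rw [hreg]
      _ = _ := by rw [mulVec_mulVec, hO, one_mulVec]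
  have hfe : Qᵀ *ᵥ (aeval A f *ᵥ fun _ => 1) = aeval B f *ᵥ fun _ => 1 := by
    rw [mulVec_mulVec, (hintertwine.aeval f).eq, ← mulVec_mulVec, hQe]
  refine ⟨hfe, fun p _ hAe ℓ hℓ hcop i => ?_⟩
  have hBint : ∀ i j, ∃ z : ℤ, B i j = z := fun i j => by
    rcases hB.2.2 i j with h | h
    exacts [⟨0, by simp [h]⟩, ⟨1, by simp [h]⟩]
  have hfBe := exists_intCast_aeval_mulVec_one hBint f i
  rw [← hfe] at hfBe ⊢
  exact exists_mulVec_apply_eq_mul_of_coprime (M := Qᵀ) (fun i j => hℓ.2.1 j i) hAe hcop i hfBe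

theorem stmt19 (n : ℕ) (A B : Matrix (Fin n) (Fin n) ℚ)
    (hA : IsAdjacency A) (hB : IsAdjacency B)
    (Q : Matrix (Fin n) (Fin n) ℚ)
    (hO : Qᵀ * Q = 1) (hreg : Q.mulVec (fun _ => 1) = fun _ => 1)
    (hQ : B = Qᵀ * A * Q)
    (f : Polynomial ℤ) (hf : f.Monic) :
    (Qᵀ.mulVec ((Polynomial.aeval A f).mulVec (fun _ => 1)) =
      (Polynomial.aeval B f).mulVec (fun _ => 1)) ∧
    (∀ (p : ℕ), p.Prime →
      (∀ i, ∃ z : ℤ, ((Polynomial.aeval A f).mulVec (fun _ => 1)) i = (p : ℚ) * z) →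
      ∀ ℓ : ℕ, IsLevel ℓ Q → Nat.Coprime ℓ p →
      ∀ i, ∃ z : ℤ, ((Polynomial.aeval B f).mulVec (fun _ => 1)) i = (p : ℚ) * z) :=
  stmt19_general n A B hB Q hO hreg hQ f
end
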